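/- Let d ≥ 2 and let u₁, u₂ : ℝ^d → ℝ be twice continuously differentiable with |∇u₁(x)| + |∇u₂(x)| ≤ 1/2 at a point x. Let F(x) = (x, u₁(x), u₂(x)) ∈ ℝ^{d+2}, let ν₁ = (1+|∇u₁|²)^{−1/2}(∇u₁, −1, 0) and ν₂ = Λ^{−1}(∇u₂ − ((∇u₁·∇u₂)/(1+|∇u₁|²))∇u₁, (∇u₁·∇u₂)/(1+|∇u₁|²), −1) be the orthonormal normal frame of the graph. Then there exists a constant C > 0 depending only on d such that for all 1 ≤ i, j ≤ d: | ∂²_{x_i x_j}F(x) · ν₁(x) + ∂²_{x_i x_j}u₁(x) | ≤ C |D²u(x)| |Du(x)|² and | ∂²_{x_i x_j}F(x) · ν₂(x) + ∂²_{x_i x_j}u₂(x) | ≤ C |D²u(x)| |Du(x)|², where |Du| = (|∇u₁|² + |∇u₂|²)^{1/2} and |D²u| = (|D²u₁|² + |D²u₂|²)^{1/2}. -/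

import Mathlib

open MeasureTheory Filter
open scoped ENNReal Topology RealInnerProductSpace

noncomputable section

abbrev Euc (d : ℕ) := EuclideanSpace ℝ (Fin d)

/-- The partial derivative `∂_{x_i} f`. -/
def pd (d : ℕ) (i : Fin d) (f : Euc d → ℝ) : Euc d → ℝ :=
  fun x => fderiv ℝ f x (EuclideanSpace.single i 1)

/-- The dot product `∇f · ∇g` of the gradients. -/
def dotGrad (d : ℕ) (f g : Euc d → ℝ) (x : Euc d) : ℝ :=
  ∑ i, pd d i f x * pd d i g x

/-- The quantity `Λ`. -/
def lamSMCF (d : ℕ) (u1 u2 : Euc d → ℝ) (x : Euc d) : ℝ :=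
  Real.sqrt ((∑ i, (pd d i u2 x -
      dotGrad d u1 u2 x / (1 + dotGrad d u1 u1 x) * pd d i u1 x) ^ 2)
    + (dotGrad d u1 u2 x / (1 + dotGrad d u1 u1 x)) ^ 2 + 1)

/-- The induced metric `g_{ij} = δ_{ij} + ∂_i u · ∂_j u` on the graph of `u = (u1, u2)`. -/
def metricSMCF (d : ℕ) (u1 u2 : Euc d → ℝ) (x : Euc d) : Matrix (Fin d) (Fin d) ℝ :=
  Matrix.of fun i j =>
    (if i = j then (1 : ℝ) else 0) + pd d i u1 x * pd d j u1 x + pd d i u2 x * pd d j u2 x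

/-- The operator `(Λ √(1+|∇u₁|²))⁻¹ Σ_{ij} g^{ij} ∂²_{x_i x_j} w`. -/
def smcfOp (d : ℕ) (u1 u2 w : Euc d → ℝ) (x : Euc d) : ℝ :=
  (lamSMCF d u1 u2 x * Real.sqrt (1 + dotGrad d u1 u1 x))⁻¹ *
    ∑ i, ∑ j, (metricSMCF d u1 u2 x)⁻¹ i j * pd d i (pd d j w) x

/-- The graph SMCF system on a time set `s`. -/
def IsSMCFOn (d : ℕ) (u1 u2 : ℝ → Euc d → ℝ) (s : Set ℝ) : Prop :=
  ∀ t ∈ s, ∀ x,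
    HasDerivWithinAt (fun τ => u1 τ x) (-(smcfOp d (u1 t) (u2 t) (u2 t) x)) s t ∧
    HasDerivWithinAt (fun τ => u2 τ x) (smcfOp d (u1 t) (u2 t) (u1 t) x) s t

/-- The `W^{k,p}` Sobolev norm, valued in `ℝ≥0∞`. -/
def eSob {F : Type*} [NormedAddCommGroup F] [NormedSpace ℝ F]
    (d : ℕ) (k : ℕ) (p : ℝ≥0∞) (f : Euc d → F) : ℝ≥0∞ :=
  ∑ n ∈ Finset.range (k + 1),
    eLpNorm (fun x => ‖iteratedFDeriv ℝ n f x‖) p volume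

/-- The `W^{k,p}` Sobolev norm, real valued. -/
def sobNorm {F : Type*} [NormedAddCommGroup F] [NormedSpace ℝ F]
    (d : ℕ) (k : ℕ) (p : ℝ≥0∞) (f : Euc d → F) : ℝ :=
  (eSob d k p f).toReal

/-- Membership in `H^∞ = ∩_k H^k`. -/
def MemHinf (d : ℕ) (f : Euc d → ℝ) : Prop := ∀ k : ℕ, eSob d k 2 f < ⊤

/-- A global-in-time smooth `H^∞` solution of the graph SMCF system with data `(u01, u02)`. -/
def IsGlobalSol (d : ℕ) (u01 u02 : Euc d → ℝ) (u1 u2 : ℝ → Euc d → ℝ) : Prop :=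
  ContDiff ℝ (⊤ : ℕ∞) (fun p : ℝ × Euc d => (u1 p.1 p.2, u2 p.1 p.2)) ∧
  IsSMCFOn d u1 u2 Set.univ ∧
  u1 0 = u01 ∧ u2 0 = u02 ∧
  ∀ t : ℝ, MemHinf d (u1 t) ∧ MemHinf d (u2 t)


/-- The vector `(v, a, b) ∈ ℝ^{d+2}` with first `d` components `v`, then `a`, then `b`. -/
def mkVec (d : ℕ) (v : Fin d → ℝ) (a b : ℝ) : Euc (d + 2) :=
  (WithLp.equiv 2 (Fin (d + 2) → ℝ)).symm (Fin.snoc (Fin.snoc v a) b)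

/-- The first normal vector `ν₁ = (1+|∇u₁|²)^{-1/2} (∇u₁, -1, 0)` of the graph. -/
def nu1 (d : ℕ) (u1 : Euc d → ℝ) (x : Euc d) : Euc (d + 2) :=
  (Real.sqrt (1 + dotGrad d u1 u1 x))⁻¹ • mkVec d (fun i => pd d i u1 x) (-1) 0

/-- The second normal vector
`ν₂ = Λ⁻¹ (∇u₂ - c ∇u₁, c, -1)`, `c = (∇u₁·∇u₂)/(1+|∇u₁|²)`. -/
def nu2 (d : ℕ) (u1 u2 : Euc d → ℝ) (x : Euc d) : Euc (d + 2) :=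
  (lamSMCF d u1 u2 x)⁻¹ • mkVec d
    (fun i => pd d i u2 x - dotGrad d u1 u2 x / (1 + dotGrad d u1 u1 x) * pd d i u1 x)
    (dotGrad d u1 u2 x / (1 + dotGrad d u1 u1 x)) (-1)

/-- The second derivative `∂²_{x_i x_j} F = (0, …, 0, ∂²_{ij}u₁, ∂²_{ij}u₂)`
of the graph map. -/
def hessVec (d : ℕ) (u1 u2 : Euc d → ℝ) (x : Euc d) (i j : Fin d) : Euc (d + 2) :=
  mkVec d (fun _ => 0) (pd d i (pd d j u1) x) (pd d i (pd d j u2) x)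

/-!
The Hessian `∂²_{ij}F = (0, ∂²_{ij}u₁, ∂²_{ij}u₂)` vanishes in the first `d`
coordinates, so its pairings with the normals are explicit:
`⟪∂²_{ij}F, ν₁⟫ = -(1+|∇u₁|²)^{-1/2} ∂²_{ij}u₁` and
`⟪∂²_{ij}F, ν₂⟫ = Λ⁻¹ (c ∂²_{ij}u₁ - ∂²_{ij}u₂)` with `c = (∇u₁·∇u₂)/(1+|∇u₁|²)`.
Since `Λ² = 1 + |∇u₂|² - (∇u₁·∇u₂)²/(1+|∇u₁|²)`, both normalising factors are `1 - O(|Du|²)`,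
and `|c| ≤ |∇u₁| |∇u₂| = O(|Du|²)` by Cauchy–Schwarz; each second derivative is bounded
by the norm of the full Hessian.
-/

lemma pd_pd_eq_iteratedFDeriv {d : ℕ} {f : Euc d → ℝ} {x : Euc d}
    (hf : DifferentiableAt ℝ (fderiv ℝ f) x) (i j : Fin d) :
    pd d i (pd d j f) x =
      iteratedFDeriv ℝ 2 f x ![EuclideanSpace.single i 1, EuclideanSpace.single j 1] := by
  change fderiv ℝ (fun y => fderiv ℝ f y (EuclideanSpace.single j 1)) x _ = _
  rw [iteratedFDeriv_two_apply, fderiv_clm_apply hf (differentiableAt_const _)]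
  simp

lemma abs_pd_pd_le_norm_iteratedFDeriv {d : ℕ} {f : Euc d → ℝ} (hf : ContDiff ℝ 2 f)
    (x : Euc d) (i j : Fin d) :
    |pd d i (pd d j f) x| ≤ ‖iteratedFDeriv ℝ 2 f x‖ := by
  have hdf : DifferentiableAt ℝ (fderiv ℝ f) x :=
    (hf.fderiv_right le_rfl).differentiable one_ne_zero x
  rw [pd_pd_eq_iteratedFDeriv hdf, ← Real.norm_eq_abs]
  simpa [Fin.prod_univ_two] using
    (iteratedFDeriv ℝ 2 f x).le_opNorm ![EuclideanSpace.single i 1, EuclideanSpace.single j 1]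

lemma dotGrad_self_nonneg (d : ℕ) (f : Euc d → ℝ) (x : Euc d) : 0 ≤ dotGrad d f f x :=
  Finset.sum_nonneg fun _ _ => mul_self_nonneg _

lemma sq_dotGrad_le_mul (d : ℕ) (f g : Euc d → ℝ) (x : Euc d) :
    dotGrad d f g x ^ 2 ≤ dotGrad d f f x * dotGrad d g g x := by
  simpa only [dotGrad, pow_two] using
    Finset.sum_mul_sq_le_sq_mul_sq Finset.univ (fun k => pd d k f x) (fun k => pd d k g x)

lemma Finset.sum_sub_mul_sq {ι : Type*} [Fintype ι] (v w : ι → ℝ) (c : ℝ) :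
    ∑ k, (v k - c * w k) ^ 2 =
      ∑ k, v k * v k - 2 * c * ∑ k, w k * v k + c ^ 2 * ∑ k, w k * w k := by
  simp only [Finset.mul_sum, ← Finset.sum_sub_distrib, ← Finset.sum_add_distrib]
  exact Finset.sum_congr rfl fun k _ => by ring

lemma lamSMCF_eq_sqrt (d : ℕ) (u1 u2 : Euc d → ℝ) (x : Euc d) :
    lamSMCF d u1 u2 x = Real.sqrt (1 + dotGrad d u2 u2 x
      - dotGrad d u1 u2 x ^ 2 / (1 + dotGrad d u1 u1 x)) := by
  have hA : 0 < 1 + dotGrad d u1 u1 x := by linarith [dotGrad_self_nonneg d u1 x]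
  rw [lamSMCF, Finset.sum_sub_mul_sq]
  congr 1
  simp only [dotGrad] at hA ⊢
  field_simp
  ring

lemma inner_mkVec (d : ℕ) (v w : Fin d → ℝ) (a b a' b' : ℝ) :
    ⟪mkVec d v a b, mkVec d w a' b'⟫ = ∑ i, v i * w i + a * a' + b * b' := by
  simp [mkVec, PiLp.inner_apply, Fin.sum_univ_castSucc, mul_comm]

lemma inner_hessVec_nu1 (d : ℕ) (u1 u2 : Euc d → ℝ) (x : Euc d) (i j : Fin d) :
    ⟪hessVec d u1 u2 x i j, nu1 d u1 x⟫ =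
      -((Real.sqrt (1 + dotGrad d u1 u1 x))⁻¹ * pd d i (pd d j u1) x) := by
  rw [nu1, hessVec, real_inner_smul_right, inner_mkVec]
  simp only [zero_mul, Finset.sum_const_zero]
  ring

lemma inner_hessVec_nu2 (d : ℕ) (u1 u2 : Euc d → ℝ) (x : Euc d) (i j : Fin d) :
    ⟪hessVec d u1 u2 x i j, nu2 d u1 u2 x⟫ =
      (lamSMCF d u1 u2 x)⁻¹ *
        (dotGrad d u1 u2 x / (1 + dotGrad d u1 u1 x) * pd d i (pd d j u1) x
          - pd d i (pd d j u2) x) := by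
  rw [nu2, hessVec, real_inner_smul_right, inner_mkVec]
  simp only [zero_mul, Finset.sum_const_zero]
  ring

lemma one_sub_inv_sqrt_le {T : ℝ} (hT : 1 ≤ T) : 1 - (Real.sqrt T)⁻¹ ≤ T - 1 := by
  have hs : 1 ≤ Real.sqrt T := Real.one_le_sqrt.mpr hT
  have hsT : Real.sqrt T ≤ T := (Real.sqrt_le_left (by linarith)).mpr (by nlinarith)
  calc 1 - (Real.sqrt T)⁻¹ = (Real.sqrt T - 1) / Real.sqrt T := by field_simp
    _ ≤ Real.sqrt T - 1 := div_le_self (by linarith) hs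
    _ ≤ T - 1 := by linarith

lemma abs_inv_sqrt_mul_sub_add_le {T : ℝ} (hT : 1 ≤ T) (a h : ℝ) :
    |(Real.sqrt T)⁻¹ * (a - h) + h| ≤ |a| + (T - 1) * |h| := by
  have hs1 : (Real.sqrt T)⁻¹ ≤ 1 := inv_le_one_of_one_le₀ (Real.one_le_sqrt.mpr hT)
  have hs0 : 0 ≤ (Real.sqrt T)⁻¹ := by positivity
  calc |(Real.sqrt T)⁻¹ * (a - h) + h|
      = |(Real.sqrt T)⁻¹ * a + (1 - (Real.sqrt T)⁻¹) * h| := by ring_nf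
    _ ≤ (Real.sqrt T)⁻¹ * |a| + (1 - (Real.sqrt T)⁻¹) * |h| := by
        refine (abs_add_le _ _).trans_eq ?_
        rw [abs_mul, abs_mul, abs_of_nonneg hs0, abs_of_nonneg (sub_nonneg.mpr hs1)]
    _ ≤ |a| + (T - 1) * |h| :=
        add_le_add (mul_le_of_le_one_left (abs_nonneg a) hs1)
          (mul_le_mul_of_nonneg_right (one_sub_inv_sqrt_le hT) (abs_nonneg h))

lemma abs_div_one_add_le {A B C : ℝ} (hA : 0 ≤ A) (hB : 0 ≤ B) (hC : C ^ 2 ≤ A * B) :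
    |C / (1 + A)| ≤ (A + B) / 2 := by
  have hCAB : |C| ≤ (A + B) / 2 :=
    abs_le_of_sq_le_sq (by nlinarith [sq_nonneg (A - B)]) (by linarith)
  rw [abs_div, abs_of_pos (by linarith : (0 : ℝ) < 1 + A)]
  exact (div_le_self (abs_nonneg C) (by linarith)).trans hCAB

lemma abs_inner_hessVec_nu1_add_le (d : ℕ) (u1 u2 : Euc d → ℝ) (x : Euc d) (i j : Fin d) :
    |⟪hessVec d u1 u2 x i j, nu1 d u1 x⟫ + pd d i (pd d j u1) x| ≤
      dotGrad d u1 u1 x * |pd d i (pd d j u1) x| := by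
  have hT : 1 ≤ 1 + dotGrad d u1 u1 x := by linarith [dotGrad_self_nonneg d u1 x]
  rw [inner_hessVec_nu1, ← mul_neg, ← zero_sub]
  simpa using abs_inv_sqrt_mul_sub_add_le hT 0 (pd d i (pd d j u1) x)

lemma abs_inner_hessVec_nu2_add_le (d : ℕ) (u1 u2 : Euc d → ℝ) (x : Euc d) (i j : Fin d) :
    |⟪hessVec d u1 u2 x i j, nu2 d u1 u2 x⟫ + pd d i (pd d j u2) x| ≤
      (dotGrad d u1 u1 x + dotGrad d u2 u2 x) / 2 * |pd d i (pd d j u1) x| +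
        dotGrad d u2 u2 x * |pd d i (pd d j u2) x| := by
  set A := dotGrad d u1 u1 x
  set B := dotGrad d u2 u2 x
  set C := dotGrad d u1 u2 x
  have hA : 0 ≤ A := dotGrad_self_nonneg d u1 x
  have hB : 0 ≤ B := dotGrad_self_nonneg d u2 x
  have hC : C ^ 2 ≤ A * B := sq_dotGrad_le_mul d u1 u2 x
  have hCA : 0 ≤ C ^ 2 / (1 + A) := by positivity
  have hCAB : C ^ 2 / (1 + A) ≤ B := by
    rw [div_le_iff₀ (by linarith)]
    nlinarith
  rw [inner_hessVec_nu2, lamSMCF_eq_sqrt]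
  refine (abs_inv_sqrt_mul_sub_add_le (by linarith) _ _).trans ?_
  rw [abs_mul]
  gcongr
  · exact abs_div_one_add_le hA hB hC
  · linarith

theorem smcf_normal_hessian_expansion_general (d : ℕ) :
    ∃ C > (0 : ℝ), ∀ u1 u2 : Euc d → ℝ,
      ContDiff ℝ 2 u1 → ContDiff ℝ 2 u2 →
      ∀ x : Euc d,
        Real.sqrt (dotGrad d u1 u1 x) + Real.sqrt (dotGrad d u2 u2 x) ≤ 1 / 2 →
        ∀ i j : Fin d,
          |⟪hessVec d u1 u2 x i j, nu1 d u1 x⟫ + pd d i (pd d j u1) x| ≤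
            C * Real.sqrt (‖iteratedFDeriv ℝ 2 u1 x‖ ^ 2 + ‖iteratedFDeriv ℝ 2 u2 x‖ ^ 2) *
              (dotGrad d u1 u1 x + dotGrad d u2 u2 x) ∧
          |⟪hessVec d u1 u2 x i j, nu2 d u1 u2 x⟫ + pd d i (pd d j u2) x| ≤
            C * Real.sqrt (‖iteratedFDeriv ℝ 2 u1 x‖ ^ 2 + ‖iteratedFDeriv ℝ 2 u2 x‖ ^ 2) *
              (dotGrad d u1 u1 x + dotGrad d u2 u2 x) := by
  refine ⟨2, two_pos, fun u1 u2 hu1 hu2 x _ i j => ?_⟩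
  set M := Real.sqrt (‖iteratedFDeriv ℝ 2 u1 x‖ ^ 2 + ‖iteratedFDeriv ℝ 2 u2 x‖ ^ 2)
  have hM1 : |pd d i (pd d j u1) x| ≤ M :=
    (abs_pd_pd_le_norm_iteratedFDeriv hu1 x i j).trans
      (Real.le_sqrt_of_sq_le (le_add_of_nonneg_right (sq_nonneg _)))
  have hM2 : |pd d i (pd d j u2) x| ≤ M :=
    (abs_pd_pd_le_norm_iteratedFDeriv hu2 x i j).trans
      (Real.le_sqrt_of_sq_le (le_add_of_nonneg_left (sq_nonneg _)))
  have hM : 0 ≤ M := Real.sqrt_nonneg _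
  have hA := dotGrad_self_nonneg d u1 x
  have hB := dotGrad_self_nonneg d u2 x
  constructor
  · calc _ ≤ dotGrad d u1 u1 x * |pd d i (pd d j u1) x| := abs_inner_hessVec_nu1_add_le ..
      _ ≤ dotGrad d u1 u1 x * M := by gcongr
      _ ≤ _ := by nlinarith [mul_nonneg hM hA, mul_nonneg hM hB]
  · calc _ ≤ _ := abs_inner_hessVec_nu2_add_le d u1 u2 x i j
      _ ≤ (dotGrad d u1 u1 x + dotGrad d u2 u2 x) / 2 * M + dotGrad d u2 u2 x * M := by
          gcongr
      _ ≤ _ := by nlinarith [mul_nonneg hM hA, mul_nonneg hM hB]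

/-- the normal components of the Hessian of the graph map equal minus the
Hessians of `u₁`, `u₂` up to cubic errors `O(|D²u| |Du|²)`. -/
theorem smcf_normal_hessian_expansion (d : ℕ) (hd : 2 ≤ d) :
    ∃ C > (0 : ℝ), ∀ u1 u2 : Euc d → ℝ,
      ContDiff ℝ 2 u1 → ContDiff ℝ 2 u2 →
      ∀ x : Euc d,
        Real.sqrt (dotGrad d u1 u1 x) + Real.sqrt (dotGrad d u2 u2 x) ≤ 1 / 2 →
        ∀ i j : Fin d,
          |⟪hessVec d u1 u2 x i j, nu1 d u1 x⟫ + pd d i (pd d j u1) x| ≤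
            C * Real.sqrt (‖iteratedFDeriv ℝ 2 u1 x‖ ^ 2 + ‖iteratedFDeriv ℝ 2 u2 x‖ ^ 2) *
              (dotGrad d u1 u1 x + dotGrad d u2 u2 x) ∧
          |⟪hessVec d u1 u2 x i j, nu2 d u1 u2 x⟫ + pd d i (pd d j u2) x| ≤
            C * Real.sqrt (‖iteratedFDeriv ℝ 2 u1 x‖ ^ 2 + ‖iteratedFDeriv ℝ 2 u2 x‖ ^ 2) *
              (dotGrad d u1 u1 x + dotGrad d u2 u2 x) :=
  smcf_normal_hessian_expansion_general d
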